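/- Let W be an s-dimensional K-vector space and V = Λ²W* ⊕ W. Define the alternating trilinear form ω on V by ω(μ₁,μ₂,·)=0 for μ₁,μ₂ ∈ Λ²W*, ω(μ,w₁,w₂)=μ(w₁,w₂) for μ ∈ Λ²W*, w₁,w₂ ∈ W, and ω(w₁,w₂,w₃)=0 for w₁,w₂,w₃ ∈ W. Then a 2-dimensional subspace of V is singular for ω if and only if it is either contained in Λ²W*, or of the form Kμ₁ ⊕ K(μ₂+w₂) with μ₁,μ₂ ∈ Λ²W* and w₂ a vector in the radical of μ₁. -/

import Mathlib

/-!
Testing `ω(u, u', (ν, 0)) = ν(u_W, u'_W)` against all alternating forms `ν` shows that the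
`W`-components of a singular plane are pairwise linearly dependent. So a singular plane `U` not
contained in `Λ²W*` contains some `x` with `x_W ≠ 0` and a nonzero `(μ₁, 0)`, and
`ω((μ₁, 0), x, (0, w)) = μ₁(x_W, w)` puts `x_W` in the radical of `μ₁`. Conversely, on
`span {(μ₁, 0), (μ₂, w₂)}` the form `ω` only produces the terms `μ₁(w₂, ·)`, which vanish, and
`μ₂(w₂, v) + μ₂(v, w₂)`, which cancel.
-/

/-- The alternating trilinear form on `V = Λ²W* ⊕ W` determined by
`ω(μ₁,μ₂,·) = 0`, `ω(μ,w₁,w₂) = μ(w₁,w₂)` and `ω(w₁,w₂,w₃) = 0`, where `Λ²W*`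
is realised as the space of alternating bilinear forms on `W`. -/
def ωSplit {K W : Type*} [Field K] [AddCommGroup W] [Module K W]
    (x y z : AlternatingMap K W K (Fin 2) × W) : K :=
  x.1 ![y.2, z.2] + y.1 ![z.2, x.2] + z.1 ![x.2, y.2]

open Module Submodule AlternatingMap

namespace AlternatingMap

variable {R M N : Type*} [CommRing R] [AddCommGroup M] [Module R M] [AddCommGroup N] [Module R N]
  (f : M [⋀^Fin 2]→ₗ[R] N)

theorem map_fin_two_zero_left (y : M) : f ![0, y] = 0 := f.map_coord_zero 0 rfl

theorem map_fin_two_zero_right (x : M) : f ![x, 0] = 0 := f.map_coord_zero 1 rfl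

theorem map_fin_two_swap (x y : M) : f ![y, x] = -f ![x, y] := by
  simpa using f.map_swap ![x, y] (i := 0) (j := 1) (by decide)

theorem map_fin_two_self (x : M) : f ![x, x] = 0 :=
  f.map_eq_zero_of_eq ![x, x] (i := 0) (j := 1) rfl (by decide)

theorem map_fin_two_smul_right (c : R) (x y : M) : f ![x, c • y] = c • f ![x, y] := by
  rw [map_fin_two_swap, map_vecCons_smul, map_fin_two_swap f y x, smul_neg]

theorem exists_map_fin_two_eq_one {K W : Type*} [Field K] [AddCommGroup W] [Module K W]
    {a b : W} (h : LinearIndependent K ![a, b]) : ∃ ν : W [⋀^Fin 2]→ₗ[K] K, ν ![a, b] = 1 := by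
  obtain ⟨g, hg⟩ := (Fintype.linearCombination K ![a, b]).exists_leftInverse_of_injective
    (LinearMap.ker_eq_bot.2 (linearIndependent_iff_injective_fintypeLinearCombination.1 h))
  have hg_single (i : Fin 2) : g (![a, b] i) = Pi.single i 1 := by
    simpa using LinearMap.congr_fun hg (Pi.single i 1)
  refine ⟨Matrix.detRowAlternating.compLinearMap g, ?_⟩
  simp only [compLinearMap_apply, hg_single]
  change Matrix.det (Matrix.of fun i => Pi.single i (1 : K)) = 1
  simp [Matrix.det_fin_two]

end AlternatingMap

theorem Submodule.eq_span_pair_of_finrank_eq_two {K V : Type*} [Field K] [AddCommGroup V]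
    [Module K V] {U : Submodule K V} (hU : finrank K U = 2) {a b : V} (ha : a ∈ U) (hb : b ∈ U)
    (hab : LinearIndependent K ![a, b]) : U = span K {a, b} := by
  have : FiniteDimensional K U := Module.finite_of_finrank_eq_succ hU
  refine (eq_of_le_of_finrank_eq (span_le.2 (Set.insert_subset_iff.2 ⟨ha, by simpa⟩)) ?_).symm
  rw [hU, ← Matrix.range_cons_cons_empty a b ![], finrank_span_eq_card hab, Fintype.card_fin]

section Singular

variable {K W : Type*} [Field K] [AddCommGroup W] [Module K W]
  {U : Submodule K ((W [⋀^Fin 2]→ₗ[K] K) × W)}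

def IsSingular (U : Submodule K ((W [⋀^Fin 2]→ₗ[K] K) × W)) : Prop :=
  ∀ u ∈ U, ∀ u' ∈ U, ∀ v, ωSplit u u' v = 0

theorem ωSplit_apply_mk_zero (u u' : (W [⋀^Fin 2]→ₗ[K] K) × W) (ν : W [⋀^Fin 2]→ₗ[K] K) :
    ωSplit u u' (ν, 0) = ν ![u.2, u'.2] := by
  simp [ωSplit, map_fin_two_zero_left, map_fin_two_zero_right]

theorem isSingular_of_forall_snd_eq_zero (hU : ∀ x ∈ U, x.2 = 0) : IsSingular U := by
  intro u hu u' hu' v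
  simp [ωSplit, hU u hu, hU u' hu', map_fin_two_zero_left, map_fin_two_zero_right]

theorem isSingular_span_pair {μ₁ : W [⋀^Fin 2]→ₗ[K] K} {w₂ : W} (hrad : ∀ w, μ₁ ![w₂, w] = 0)
    (μ₂ : W [⋀^Fin 2]→ₗ[K] K) : IsSingular (span K {(μ₁, 0), (μ₂, w₂)}) := by
  rintro _ hu _ hu' ⟨ν, w⟩
  obtain ⟨a, b, rfl⟩ := mem_span_pair.1 hu
  obtain ⟨c, d, rfl⟩ := mem_span_pair.1 hu'
  have hrad' : μ₁ ![w, w₂] = 0 := by rw [map_fin_two_swap, hrad, neg_zero]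
  simp only [ωSplit, Prod.fst_add, Prod.snd_add, Prod.smul_fst, Prod.smul_snd, smul_zero,
    zero_add, AlternatingMap.add_apply, AlternatingMap.smul_apply, map_vecCons_smul,
    map_fin_two_smul_right, map_fin_two_self, hrad, hrad', smul_eq_mul, map_fin_two_swap μ₂ w₂ w]
  ring

theorem IsSingular.not_linearIndependent_snd (hsing : IsSingular U)
    {u u' : (W [⋀^Fin 2]→ₗ[K] K) × W} (hu : u ∈ U) (hu' : u' ∈ U) :
    ¬LinearIndependent K ![u.2, u'.2] := fun h => by
  obtain ⟨ν, hν⟩ := exists_map_fin_two_eq_one h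
  simpa [ωSplit_apply_mk_zero, hν] using hsing u hu u' hu' (ν, 0)

theorem IsSingular.exists_eq_span_pair (hsing : IsSingular U) (hU : finrank K U = 2)
    {x : (W [⋀^Fin 2]→ₗ[K] K) × W} (hx : x ∈ U) (hx₂ : x.2 ≠ 0) :
    ∃ μ : W [⋀^Fin 2]→ₗ[K] K, (∀ w, μ ![x.2, w] = 0) ∧ U = span K {(μ, 0), x} := by
  have hx₀ : x ≠ 0 := by rintro rfl; exact hx₂ rfl
  obtain ⟨y, hyU, hy⟩ : ∃ y ∈ U, y ∉ span K {x} := by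
    refine SetLike.exists_of_lt (lt_of_le_of_ne ((span_singleton_le_iff_mem _ _).2 hx) ?_)
    rintro rfl
    simp [finrank_span_singleton hx₀] at hU
  obtain ⟨c, hc⟩ : ∃ c : K, c • x.2 = y.2 := by
    by_contra! h
    exact hsing.not_linearIndependent_snd hx hyU ((LinearIndependent.pair_iff' hx₂).2 h)
  set z := y - c • x
  have hzU : z ∈ U := sub_mem hyU (U.smul_mem c hx)
  have hz₂ : z.2 = 0 := by simp [z, hc]
  have hz₀ : z ≠ 0 := fun h => hy <| by
    rw [sub_eq_zero] at h
    exact h ▸ smul_mem _ _ (mem_span_singleton_self x)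
  have hz : ((z.1, 0) : (W [⋀^Fin 2]→ₗ[K] K) × W) = z := Prod.ext rfl hz₂.symm
  refine ⟨z.1, fun w => ?_, ?_⟩
  · simpa [ωSplit, hz₂, map_fin_two_zero_right] using hsing z hzU x hx (0, w)
  · rw [hz]
    refine U.eq_span_pair_of_finrank_eq_two hU hzU hx ((LinearIndependent.pair_iff' hz₀).2 ?_)
    intro a h
    exact hx₂ (by rw [← h]; simp [hz₂])

end Singular

theorem stmt16_general {K W : Type*} [Field K] [AddCommGroup W] [Module K W]
    (U : Submodule K (AlternatingMap K W K (Fin 2) × W))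
    (hU : Module.finrank K U = 2) :
    (∀ u ∈ U, ∀ u' ∈ U, ∀ v, ωSplit u u' v = 0) ↔
      ((∀ x ∈ U, x.2 = 0) ∨
        ∃ (μ₁ μ₂ : AlternatingMap K W K (Fin 2)) (w₂ : W),
          (∀ w' : W, μ₁ ![w₂, w'] = 0) ∧
          U = Submodule.span K {(μ₁, 0), (μ₂, w₂)}) := by
  change IsSingular U ↔ _
  constructor
  · intro hsing
    by_cases hall : ∀ x ∈ U, x.2 = 0
    · exact Or.inl hall
    obtain ⟨x, hx, hx₂⟩ := not_forall₂.1 hall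
    obtain ⟨μ, hrad, rfl⟩ := hsing.exists_eq_span_pair hU hx hx₂
    exact Or.inr ⟨μ, x.1, x.2, hrad, rfl⟩
  · rintro (hall | ⟨μ₁, μ₂, w₂, hrad, rfl⟩)
    · exact isSingular_of_forall_snd_eq_zero hall
    · exact isSingular_span_pair hrad μ₂

/-- A 2-dimensional subspace of `V = Λ²W* ⊕ W` is singular for
`ωSplit` iff it is contained in `Λ²W*`, or is of the form `Kμ₁ ⊕ K(μ₂ + w₂)`
with `μ₁, μ₂ ∈ Λ²W*` and `w₂` in the radical of `μ₁`. -/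
theorem stmt16 {K W : Type*} [Field K] [AddCommGroup W] [Module K W]
    [FiniteDimensional K W]
    (U : Submodule K (AlternatingMap K W K (Fin 2) × W))
    (hU : Module.finrank K U = 2) :
    (∀ u ∈ U, ∀ u' ∈ U, ∀ v, ωSplit u u' v = 0) ↔
      ((∀ x ∈ U, x.2 = 0) ∨
        ∃ (μ₁ μ₂ : AlternatingMap K W K (Fin 2)) (w₂ : W),
          (∀ w' : W, μ₁ ![w₂, w'] = 0) ∧
          U = Submodule.span K {(μ₁, 0), (μ₂, w₂)}) :=
  stmt16_general U hU
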